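/- The sequence (η_N)_{N∈ℕ} of approximate interface displacements is uniformly bounded in L^∞(0,T; H¹₀(0,1)); moreover, for T small enough there exist constants R_min, R_max > 0 such that 0 < R_min ≤ 1 + η_N(t,z) ≤ R_max for all N ∈ ℕ, z ∈ (0,1), t ∈ (0,T). -/

import Mathlib

open MeasureTheory Set Filter

noncomputable section

/-- A point of the plane: first coordinate `z` (longitudinal), second `r` (radial/vertical). -/
abbrev Pt : Type := ℝ × ℝ

/-- The reference fluid domain `Ω_F = (0,1) × (0,1)`. -/
def ΩF : Set Pt := Ioo (0:ℝ) 1 ×ˢ Ioo (0:ℝ) 1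

/-- The thick structure domain `Ω_S = (0,1) × (1,2)`. -/
def ΩS : Set Pt := Ioo (0:ℝ) 1 ×ˢ Ioo (1:ℝ) 2

/-- The moving fluid domain below the graph of `1 + η`. -/
def Ωmov (η : ℝ → ℝ) : Set Pt :=
  {x : Pt | x.1 ∈ Ioo (0:ℝ) 1 ∧ x.2 ∈ Ioo (0:ℝ) (1 + η x.1)}

/-- Euclidean dot product on `ℝ × ℝ`. -/
def dot (a b : Pt) : ℝ := a.1 * b.1 + a.2 * b.2

/-- Partial derivative in the `z`-direction. -/
def pz (f : Pt → ℝ) (x : Pt) : ℝ := fderiv ℝ f x ((1:ℝ), (0:ℝ))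

/-- Partial derivative in the `r`-direction. -/
def pr (f : Pt → ℝ) (x : Pt) : ℝ := fderiv ℝ f x ((0:ℝ), (1:ℝ))

/-- First (longitudinal) component of a vector field. -/
def c1 (u : Pt → Pt) : Pt → ℝ := fun x => (u x).1

/-- Second (radial) component of a vector field. -/
def c2 (u : Pt → Pt) : Pt → ℝ := fun x => (u x).2

/-- Divergence of a planar vector field. -/
def divg (u : Pt → Pt) (x : Pt) : ℝ := pz (c1 u) x + pr (c2 u) x

/-- Off-diagonal entry of the symmetrized gradient `D(u)`. -/
def D12 (u : Pt → Pt) (x : Pt) : ℝ := (pr (c1 u) x + pz (c2 u) x) / 2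

/-- Frobenius product `D(u) : D(v)` of symmetrized gradients. -/
def DdotD (u v : Pt → Pt) (x : Pt) : ℝ :=
  pz (c1 u) x * pz (c1 v) x + pr (c2 u) x * pr (c2 v) x + 2 * D12 u x * D12 v x

/-- `|D(u)|²`. -/
def DSq (u : Pt → Pt) (x : Pt) : ℝ := DdotD u u x

/-- `|∇u|²` (full gradient, squared Frobenius norm). -/
def gradSq (u : Pt → Pt) (x : Pt) : ℝ :=
  (pz (c1 u) x)^2 + (pr (c1 u) x)^2 + (pz (c2 u) x)^2 + (pr (c2 u) x)^2

/-- The elastic bilinear form of the thick structure: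
`a_S(d,ψ) = ∫_{Ω_S} (2 D(d):D(ψ) + (∇⋅d)(∇⋅ψ))`. -/
def aS (d ψ : Pt → Pt) : ℝ :=
  ∫ x in ΩS, (2 * DdotD d ψ x + divg d x * divg ψ x)

/-- `z`-component of the ALE-transformed gradient `∇^η`. -/
def gz (η : ℝ → ℝ) (f : Pt → ℝ) (x : Pt) : ℝ :=
  pz f x - x.2 * deriv η x.1 / (1 + η x.1) * pr f x

/-- `r`-component of the ALE-transformed gradient `∇^η`. -/
def gr (η : ℝ → ℝ) (f : Pt → ℝ) (x : Pt) : ℝ := pr f x / (1 + η x.1)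

/-- Transformed divergence `∇^η ⋅ u`. -/
def divEta (η : ℝ → ℝ) (u : Pt → Pt) (x : Pt) : ℝ := gz η (c1 u) x + gr η (c2 u) x

/-- Off-diagonal entry of `D^η(u)`. -/
def D12Eta (η : ℝ → ℝ) (u : Pt → Pt) (x : Pt) : ℝ :=
  (gr η (c1 u) x + gz η (c2 u) x) / 2

/-- `D^η(u) : D^η(v)`. -/
def DdotDEta (η : ℝ → ℝ) (u v : Pt → Pt) (x : Pt) : ℝ :=
  gz η (c1 u) x * gz η (c1 v) x + gr η (c2 u) x * gr η (c2 v) x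
    + 2 * D12Eta η u x * D12Eta η v x

/-- `|D^η(u)|²`. -/
def DSqEta (η : ℝ → ℝ) (u : Pt → Pt) (x : Pt) : ℝ := DdotDEta η u u x

/-- `|∇^η u|²`. -/
def gradSqEta (η : ℝ → ℝ) (u : Pt → Pt) (x : Pt) : ℝ :=
  (gz η (c1 u) x)^2 + (gr η (c1 u) x)^2 + (gz η (c2 u) x)^2 + (gr η (c2 u) x)^2

/-- Convective term `((w ⋅ ∇^η) u) ⋅ q`. -/
def convEta (η : ℝ → ℝ) (w u q : Pt → Pt) (x : Pt) : ℝ :=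
  ((w x).1 * gz η (c1 u) x + (w x).2 * gr η (c1 u) x) * (q x).1
    + ((w x).1 * gz η (c2 u) x + (w x).2 * gr η (c2 u) x) * (q x).2

/-- Convective term `((u ⋅ ∇) v) ⋅ w` (untransformed). -/
def conv (u v w : Pt → Pt) (x : Pt) : ℝ :=
  ((u x).1 * pz (c1 v) x + (u x).2 * pr (c1 v) x) * (w x).1
    + ((u x).1 * pz (c2 v) x + (u x).2 * pr (c2 v) x) * (w x).2

/-- Classical representative of `H¹₀(0,1)` (solution/test class for the thin structure). -/
def MemVW (f : ℝ → ℝ) : Prop :=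
  ContDiffOn ℝ 1 f (Icc 0 1) ∧ f 0 = 0 ∧ f 1 = 0

/-- Classical representative of the thick-structure space `V_S`. -/
def MemVS (d : Pt → Pt) : Prop :=
  ContDiffOn ℝ 1 d (closure ΩS) ∧
  (∀ z ∈ Icc (0:ℝ) 1, (d (z, 1)).1 = 0) ∧
  (∀ r ∈ Icc (1:ℝ) 2, d (0, r) = 0 ∧ d (1, r) = 0)

/-- Classical representative of the fluid space `V_F^η` on the reference domain `Ω_F`. -/
def MemVF (q : Pt → Pt) : Prop :=
  ContDiffOn ℝ 1 q (closure ΩF) ∧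
  (∀ z ∈ Icc (0:ℝ) 1, (q (z, 1)).1 = 0) ∧
  (∀ z ∈ Icc (0:ℝ) 1, (q (z, 0)).2 = 0) ∧
  (∀ r ∈ Icc (0:ℝ) 1, (q (0, r)).2 = 0 ∧ (q (1, r)).2 = 0)

/-- Weak formulation of the semi-discretized structure sub-problem (Problem A1). -/
def ProblemA1 (dt : ℝ) (vn ηn : ℝ → ℝ) (Vn dn : Pt → Pt)
    (vh ηh : ℝ → ℝ) (Vh dh : Pt → Pt) : Prop :=
  MemVW vh ∧ MemVW ηh ∧ MemVS Vh ∧ MemVS dh ∧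
  (∀ z ∈ Icc (0:ℝ) 1, dh (z, 1) = (0, ηh z)) ∧
  (∀ x ∈ closure ΩS, dt⁻¹ • (dh x - dn x) = Vh x) ∧
  (∀ z ∈ Icc (0:ℝ) 1, (ηh z - ηn z) / dt = vh z) ∧
  (∀ ψ : ℝ → ℝ, ∀ Ψ : Pt → Pt, MemVW ψ → MemVS Ψ →
    (∀ z ∈ Icc (0:ℝ) 1, Ψ (z, 1) = (0, ψ z)) →
    (∫ x in ΩS, dot (dt⁻¹ • (Vh x - Vn x)) (Ψ x))
      + (∫ z in Ioo (0:ℝ) 1, ((vh z - vn z) / dt) * ψ z)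
      + aS dh Ψ
      + (∫ z in Ioo (0:ℝ) 1, deriv ηh z * deriv ψ z) = 0)

/-- Weak formulation of the semi-discretized fluid sub-problem (Problem A2). -/
def ProblemA2 (dt Pin Pout : ℝ) (ηn : ℝ → ℝ) (un uh : Pt → Pt) (vh : ℝ → ℝ)
    (un1 : Pt → Pt) (vn1 : ℝ → ℝ) : Prop :=
  MemVF un1 ∧
  (∀ x ∈ ΩF, divEta ηn un1 x = 0) ∧
  (∀ z ∈ Icc (0:ℝ) 1, un1 (z, 1) = (0, vn1 z)) ∧
  (∀ q : Pt → Pt, ∀ ψ : ℝ → ℝ, MemVF q →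
    (∀ z ∈ Icc (0:ℝ) 1, q (z, 1) = (0, ψ z)) →
    (∫ x in ΩF, (1 + ηn x.1) *
        (dot (dt⁻¹ • (un1 x - uh x)) (q x)
          + (1/2) * convEta ηn (fun y => un y - ((0:ℝ), vh y.1 * y.2)) un1 q x
          - (1/2) * convEta ηn (fun y => un y - ((0:ℝ), vh y.1 * y.2)) q un1 x))
      + (1/2) * (∫ x in ΩF, vh x.1 * dot (un1 x) (q x))
      + 2 * (∫ x in ΩF, (1 + ηn x.1) * DdotDEta ηn un1 q x)
      + (∫ z in Ioo (0:ℝ) 1, ((vn1 z - vh z) / dt) * ψ z)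
      = Pin * (∫ r in Ioo (0:ℝ) 1, (q ((0:ℝ), r)).1)
        - Pout * (∫ r in Ioo (0:ℝ) 1, (q ((1:ℝ), r)).1))

/-- Discrete kinetic energy `E_kin = ½(∫_{Ω_F}(1+w)|u|² + ‖v‖² + ‖V‖²)`. -/
def EkinD (w : ℝ → ℝ) (u : Pt → Pt) (v : ℝ → ℝ) (V : Pt → Pt) : ℝ :=
  (1/2) * ((∫ x in ΩF, (1 + w x.1) * dot (u x) (u x))
    + (∫ z in Ioo (0:ℝ) 1, (v z)^2) + (∫ x in ΩS, dot (V x) (V x)))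

/-- Discrete elastic energy `E_el = ½(‖∂_z η‖² + 2‖D(d)‖² + ‖∇⋅d‖²)`. -/
def EelD (η : ℝ → ℝ) (d : Pt → Pt) : ℝ :=
  (1/2) * ((∫ z in Ioo (0:ℝ) 1, (deriv η z)^2)
    + 2 * (∫ x in ΩS, DSq d x) + (∫ x in ΩS, (divg d x)^2))

/-- Index of the time sub-interval `((n-1)Δt, nΔt]` containing `t`. -/
def stepIndex (dt t : ℝ) : ℕ := Nat.ceil (t / dt)

/-- Piecewise-constant-in-time interpolation of a sequence. -/
def stepFun {α : Type*} (dt : ℝ) (f : ℕ → α) : ℝ → α := fun t => f (stepIndex dt t)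

/-- Piecewise-linear-in-time interpolation of a sequence of functions. -/
def linInterp (dt : ℝ) (f : ℕ → ℝ → ℝ) (t z : ℝ) : ℝ :=
  f (stepIndex dt t - 1) z
    + ((t - ((stepIndex dt t - 1 : ℕ) : ℝ) * dt) / dt)
      * (f (stepIndex dt t) z - f (stepIndex dt t - 1) z)

/-- Squared Gagliardo `H^s`-seminorm on a planar set. -/
def gagliardo2 (s : ℝ) (Ω : Set Pt) (f : Pt → ℝ) : ℝ :=
  ∫ x in Ω, ∫ y in Ω, (f x - f y)^2 / dist x y ^ (2 + 2*s)

/-- Squared `H^s`-norm on a planar set. -/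
def HsNormSq2 (s : ℝ) (Ω : Set Pt) (f : Pt → ℝ) : ℝ :=
  (∫ x in Ω, (f x)^2) + gagliardo2 s Ω f

/-- Squared Gagliardo `H^s`-seminorm on `(0,1)`. -/
def gagliardo1 (s : ℝ) (f : ℝ → ℝ) : ℝ :=
  ∫ x in Ioo (0:ℝ) 1, ∫ y in Ioo (0:ℝ) 1, (f x - f y)^2 / |x - y| ^ (1 + 2*s)

/-- Squared `H^s`-norm on `(0,1)`. -/
def HsNormSq1 (s : ℝ) (f : ℝ → ℝ) : ℝ :=
  (∫ x in Ioo (0:ℝ) 1, (f x)^2) + gagliardo1 s f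

/-- Weak partial derivative (in direction `e`) on an open planar set. -/
def WeakPartial (Ω : Set Pt) (e : Pt) (f g : Pt → ℝ) : Prop :=
  ∀ φ : Pt → ℝ, ContDiff ℝ (⊤ : ℕ∞) φ → tsupport φ ⊆ Ω →
    ∫ x in Ω, f x * (fderiv ℝ φ x e) = - ∫ x in Ω, g x * φ x

/-- `H¹₀(0,1)` via weak derivatives (with continuous representative). -/
def MemH10 (f : ℝ → ℝ) : Prop :=
  ContinuousOn f (Icc 0 1) ∧ f 0 = 0 ∧ f 1 = 0 ∧
  MemLp f 2 (volume.restrict (Ioo (0:ℝ) 1)) ∧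
  ∃ g : ℝ → ℝ, MemLp g 2 (volume.restrict (Ioo (0:ℝ) 1)) ∧
    ∀ φ : ℝ → ℝ, ContDiff ℝ (⊤ : ℕ∞) φ → tsupport φ ⊆ Ioo (0:ℝ) 1 →
      ∫ z in Ioo (0:ℝ) 1, f z * deriv φ z = - ∫ z in Ioo (0:ℝ) 1, g z * φ z

/-- `H¹(Ω_S)` via weak derivatives. -/
def MemH1S (d : Pt → Pt) : Prop :=
  MemLp d 2 (volume.restrict ΩS) ∧
  ∃ g11 g12 g21 g22 : Pt → ℝ,
    MemLp g11 2 (volume.restrict ΩS) ∧ MemLp g12 2 (volume.restrict ΩS) ∧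
    MemLp g21 2 (volume.restrict ΩS) ∧ MemLp g22 2 (volume.restrict ΩS) ∧
    WeakPartial ΩS ((1:ℝ), (0:ℝ)) (c1 d) g11 ∧ WeakPartial ΩS ((0:ℝ), (1:ℝ)) (c1 d) g12 ∧
    WeakPartial ΩS ((1:ℝ), (0:ℝ)) (c2 d) g21 ∧ WeakPartial ΩS ((0:ℝ), (1:ℝ)) (c2 d) g22

/-- Weak(*) convergence of time-dependent scalar functions on `(0,T)×(0,1)`, tested
against smooth compactly supported test functions. -/
def WConv1 (T : ℝ) (fN : ℕ → ℝ → ℝ → ℝ) (f : ℝ → ℝ → ℝ) : Prop :=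
  ∀ g : ℝ × ℝ → ℝ, ContDiff ℝ (⊤ : ℕ∞) g → HasCompactSupport g →
    Tendsto (fun N => ∫ t in Ioo 0 T, ∫ z in Ioo (0:ℝ) 1, fN N t z * g (t, z))
      atTop (nhds (∫ t in Ioo 0 T, ∫ z in Ioo (0:ℝ) 1, f t z * g (t, z)))

/-- Weak(*) convergence of time-dependent scalar functions on `(0,T)×Ω`, tested
against smooth compactly supported test functions. -/
def WConv2 (T : ℝ) (Ω : Set Pt) (fN : ℕ → ℝ → Pt → ℝ) (f : ℝ → Pt → ℝ) : Prop :=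
  ∀ g : ℝ × Pt → ℝ, ContDiff ℝ (⊤ : ℕ∞) g → HasCompactSupport g →
    Tendsto (fun N => ∫ t in Ioo 0 T, ∫ x in Ω, fN N t x * g (t, x))
      atTop (nhds (∫ t in Ioo 0 T, ∫ x in Ω, f t x * g (t, x)))


/-! ### STATEMENT 6: uniform boundedness of the approximate interface displacements,
and uniform bounds `0 < R_min ≤ 1 + η_N ≤ R_max` for small time horizons. -/

namespace Aux6

lemma young {a b T : ℝ} (hT : 0 < T) : 2* |a| * |b| ≤ (1/T)*a^2 + T*b^2 := by
  rw [← sq_abs a, ← sq_abs b]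
  set x := |a|; set y := |b|
  have h : T * (2*x*y) ≤ x^2 + T^2*y^2 := by nlinarith [sq_nonneg (x - T*y)]
  calc 2*x*y = (T*(2*x*y))/T := by field_simp
    _ ≤ (x^2 + T^2*y^2)/T := by apply div_le_div_of_nonneg_right h hT.le |>.trans_eq rfl
    _ = (1/T)*x^2 + T*y^2 := by field_simp

lemma memVW_sub {f g : ℝ → ℝ} (hf : MemVW f) (hg : MemVW g) :
    MemVW (fun z => f z - g z) :=
  ⟨hf.1.sub hg.1, by simp [hf.2.1, hg.2.1], by simp [hf.2.2, hg.2.2]⟩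

lemma dwCont {f : ℝ → ℝ} (hf : MemVW f) :
    ContinuousOn (derivWithin f (Icc 0 1)) (Icc (0:ℝ) 1) := by
  have h : ContDiffOn ℝ 0 (derivWithin f (Icc 0 1)) (Icc (0:ℝ) 1) :=
    hf.1.derivWithin (uniqueDiffOn_Icc one_pos) (by norm_num)
  exact h.continuousOn

lemma deriv_eq_dw {f : ℝ → ℝ} (hf : MemVW f) {t : ℝ} (ht : t ∈ Ioo (0:ℝ) 1) :
    deriv f t = derivWithin f (Icc 0 1) t :=
  (derivWithin_of_mem_nhds (Icc_mem_nhds ht.1 ht.2)).symm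

lemma diffAt {f : ℝ → ℝ} (hf : MemVW f) {t : ℝ} (ht : t ∈ Ioo (0:ℝ) 1) :
    DifferentiableAt ℝ f t :=
  ((hf.1.differentiableOn (by norm_num)) t (Ioo_subset_Icc_self ht)).differentiableAt
    (Icc_mem_nhds ht.1 ht.2)

lemma intOn {F G : ℝ → ℝ} (hG : ContinuousOn G (Icc (0:ℝ) 1))
    (heq : ∀ t ∈ Ioo (0:ℝ) 1, F t = G t) {s : Set ℝ} (hs : s ⊆ Ioo (0:ℝ) 1)
    (hms : MeasurableSet s) : IntegrableOn F s volume :=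
  ((hG.integrableOn_Icc).mono_set (hs.trans Ioo_subset_Icc_self)).congr_fun
    (fun t ht => (heq t (hs ht)).symm) hms

lemma intOn' {F : ℝ → ℝ} (hF : ContinuousOn F (Icc (0:ℝ) 1)) :
    IntegrableOn F (Ioo (0:ℝ) 1) volume :=
  hF.integrableOn_Icc.mono_set Ioo_subset_Icc_self

lemma int_deriv_sq {f : ℝ → ℝ} (hf : MemVW f) :
    IntegrableOn (fun t => (deriv f t)^2) (Ioo (0:ℝ) 1) volume :=
  intOn ((dwCont hf).pow 2) (fun t ht => by rw [deriv_eq_dw hf ht]; rfl) subset_rfl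
    measurableSet_Ioo

lemma int_abs_mul {f : ℝ → ℝ} (hf : MemVW f) {s : Set ℝ}
    (hs : s ⊆ Ioo (0:ℝ) 1) (hms : MeasurableSet s) :
    IntegrableOn (fun t => 2* |f t| * |deriv f t|) s volume :=
  intOn (G := fun t => 2* |f t| * |derivWithin f (Icc 0 1) t|)
    (((continuousOn_const.mul hf.1.continuousOn.abs)).mul (dwCont hf).abs)
    (fun t ht => by rw [deriv_eq_dw hf ht]) hs hms

lemma int_mul {f : ℝ → ℝ} (hf : MemVW f) {s : Set ℝ}
    (hs : s ⊆ Ioo (0:ℝ) 1) (hms : MeasurableSet s) :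
    IntegrableOn (fun t => 2*f t*deriv f t) s volume :=
  intOn (G := fun t => 2*f t*derivWithin f (Icc 0 1) t)
    ((continuousOn_const.mul hf.1.continuousOn).mul (dwCont hf))
    (fun t ht => by rw [deriv_eq_dw hf ht]) hs hms

lemma sq_le {f : ℝ → ℝ} (hf : MemVW f) {z : ℝ} (hz : z ∈ Icc (0:ℝ) 1) :
    (f z)^2 ≤ ∫ t in Ioo (0:ℝ) 1, 2* |f t| * |deriv f t| := by
  have hsub : Ioo (0:ℝ) z ⊆ Ioo (0:ℝ) 1 := Ioo_subset_Ioo le_rfl hz.2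
  have hcontsq : ContinuousOn (fun s => f s ^ 2) (Icc 0 z) :=
    (hf.1.continuousOn.mono (Icc_subset_Icc le_rfl hz.2)).pow 2
  have hder : ∀ t ∈ Ioo 0 z, HasDerivAt (fun s => f s ^ 2) (2 * f t * deriv f t) t := by
    intro t ht
    have h := ((diffAt hf (hsub ht)).hasDerivAt).fun_pow 2
    refine h.congr_deriv ?_
    push_cast
    ring
  have hint : IntervalIntegrable (fun t => 2 * f t * deriv f t) volume 0 z := by
    rw [intervalIntegrable_iff_integrableOn_Ioo_of_le hz.1]
    exact int_mul hf hsub measurableSet_Ioo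
  have hftc := intervalIntegral.integral_eq_sub_of_hasDerivAt_of_le hz.1 hcontsq hder hint
  rw [hf.2.1] at hftc
  have h1 : (f z)^2 = ∫ t in Ioo 0 z, 2 * f t * deriv f t := by
    rw [intervalIntegral.integral_of_le hz.1, integral_Ioc_eq_integral_Ioo] at hftc
    simpa using hftc.symm
  have h2 : (∫ t in Ioo 0 z, 2 * f t * deriv f t) ≤ ∫ t in Ioo 0 z, 2* |f t| * |deriv f t| := by
    refine setIntegral_mono_on (int_mul hf hsub measurableSet_Ioo)
      (int_abs_mul hf hsub measurableSet_Ioo) measurableSet_Ioo (fun t _ => ?_)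
    calc 2 * f t * deriv f t ≤ |2 * f t * deriv f t| := le_abs_self _
      _ = 2* |f t| * |deriv f t| := by rw [abs_mul, abs_mul, abs_two]
  have h3 : (∫ t in Ioo 0 z, 2* |f t| * |deriv f t|) ≤ ∫ t in Ioo (0:ℝ) 1, 2* |f t| * |deriv f t| := by
    refine setIntegral_mono_set (int_abs_mul hf subset_rfl measurableSet_Ioo)
      (Eventually.of_forall fun t => by positivity) hsub.eventuallyLE
  linarith

end Aux6

/-- Let `η^n_{T,N}` be the approximate interface displacements produced
by the operator-splitting scheme (with `η⁰ = η₀`, the update `η^{n+1} = η^n + Δt v^{n+1/2}`,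
and the uniform energy estimate `E ≤ E₀ + C̃‖P‖²_{L²(0,T)}`, nondecreasing in `T`).
Then for each `T > 0` the sequence `(η_N)` is uniformly bounded in `L^∞(0,T;H¹₀(0,1))`,
and for `T` small enough there are `0 < R_min ≤ R_max` with
`R_min ≤ 1 + η_N(t,z) ≤ R_max` for all `N`, `z ∈ (0,1)`, `t ∈ (0,T)`. -/
theorem approximate_displacements_uniformly_bounded
    (η0 : ℝ → ℝ) (hη0 : MemVW η0)
    (hη0pos : ∀ z ∈ Icc (0:ℝ) 1, 0 < 1 + η0 z)
    (PinF PoutF : ℝ → ℝ)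
    (hP : ∀ T : ℝ, 0 < T → MemLp PinF 2 (volume.restrict (Ioo 0 T)) ∧
      MemLp PoutF 2 (volume.restrict (Ioo 0 T)))
    -- the scheme data: for each time horizon T, each N and each step n,
    -- the displacement η^n_{T,N} and the interface velocity v^{n+1/2}_{T,N}
    (η vh : ℝ → ℕ → ℕ → ℝ → ℝ)
    (hreg : ∀ T N n, MemVW (η T N n) ∧ MemVW (vh T N n))
    (hinit : ∀ T N, η T N 0 = η0)
    (hstep : ∀ (T : ℝ), 0 < T → ∀ (N : ℕ), 0 < N → ∀ n < N, ∀ z ∈ Icc (0:ℝ) 1,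
      η T N (n+1) z = η T N n z + (T/N) * vh T N n z)
    -- the uniform (in N and n) discrete energy estimate, with a bound nondecreasing in T
    (E0 Ctilde : ℝ) (hE0 : 0 ≤ E0) (hCtilde : 0 < Ctilde)
    (henergy : ∀ (T : ℝ), 0 < T → ∀ (N : ℕ), 0 < N → ∀ n ≤ N,
      (1/2) * (∫ z in Ioo (0:ℝ) 1, (deriv (η T N n) z)^2)
        + (1/2) * (if n < N then ∫ z in Ioo (0:ℝ) 1, (vh T N n z)^2 else 0)
      ≤ E0 + Ctilde * ((∫ s in Ioo 0 T, (PinF s)^2) + (∫ s in Ioo 0 T, (PoutF s)^2))) :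
    -- (a) uniform boundedness in L^∞(0,T;H¹₀(0,1))
    (∀ T : ℝ, 0 < T → ∃ M : ℝ, ∀ (N : ℕ), 0 < N → ∀ n ≤ N,
      (∫ z in Ioo (0:ℝ) 1, (η T N n z)^2)
        + (∫ z in Ioo (0:ℝ) 1, (deriv (η T N n) z)^2) ≤ M) ∧
    -- (b) for T small enough, 0 < R_min ≤ 1 + η_N ≤ R_max uniformly
    (∃ T0 : ℝ, 0 < T0 ∧ ∃ Rmin Rmax : ℝ, 0 < Rmin ∧
      ∀ (T : ℝ), 0 < T → T ≤ T0 → ∀ (N : ℕ), 0 < N → ∀ n ≤ N, ∀ z ∈ Icc (0:ℝ) 1,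
        Rmin ≤ 1 + η T N n z ∧ 1 + η T N n z ≤ Rmax) := by
  -- the T-dependent energy bound
  set C : ℝ → ℝ := fun T =>
    E0 + Ctilde * ((∫ s in Ioo 0 T, (PinF s)^2) + (∫ s in Ioo 0 T, (PoutF s)^2)) with hCdef
  have hCnn : ∀ T : ℝ, 0 ≤ C T := by
    intro T
    have h1 : (0:ℝ) ≤ ∫ s in Ioo 0 T, (PinF s)^2 :=
      setIntegral_nonneg measurableSet_Ioo fun s _ => sq_nonneg _
    have h2 : (0:ℝ) ≤ ∫ s in Ioo 0 T, (PoutF s)^2 :=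
      setIntegral_nonneg measurableSet_Ioo fun s _ => sq_nonneg _
    have := mul_nonneg hCtilde.le (add_nonneg h1 h2)
    simp only [hCdef]; linarith
  -- derivative bound
  have hderiv_bd : ∀ (T : ℝ), 0 < T → ∀ (N : ℕ), 0 < N → ∀ n ≤ N,
      (∫ z in Ioo (0:ℝ) 1, (deriv (η T N n) z)^2) ≤ 2 * C T := by
    intro T hT N hN n hn
    have he := henergy T hT N hN n hn
    have hif : (0:ℝ) ≤ (if n < N then ∫ z in Ioo (0:ℝ) 1, (vh T N n z)^2 else 0) := by
      split_ifs
      · exact setIntegral_nonneg measurableSet_Ioo fun z _ => sq_nonneg _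
      · exact le_rfl
    simp only [hCdef]; linarith
  -- velocity bound
  have hvh_bd : ∀ (T : ℝ), 0 < T → ∀ (N : ℕ), 0 < N → ∀ k < N,
      (∫ z in Ioo (0:ℝ) 1, (vh T N k z)^2) ≤ 2 * C T := by
    intro T hT N hN k hk
    have he := henergy T hT N hN k hk.le
    rw [if_pos hk] at he
    have hd : (0:ℝ) ≤ ∫ z in Ioo (0:ℝ) 1, (deriv (η T N k) z)^2 :=
      setIntegral_nonneg measurableSet_Ioo fun z _ => sq_nonneg _
    simp only [hCdef]; linarith
  -- representation of η^n as η0 + Δt ∑ v^k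
  have hsum : ∀ (T : ℝ), 0 < T → ∀ (N : ℕ), 0 < N → ∀ n ≤ N, ∀ z ∈ Icc (0:ℝ) 1,
      η T N n z = η0 z + (T/N) * ∑ k ∈ Finset.range n, vh T N k z := by
    intro T hT N hN n
    induction n with
    | zero => intro _ z hz; simp [hinit T N]
    | succ n ih =>
      intro hn z hz
      have hnN : n < N := Nat.lt_of_succ_le hn
      rw [hstep T hT N hN n hnN z hz, ih hnN.le z hz, Finset.sum_range_succ]
      ring
  -- L² bound on the difference η^n − η0
  have hL2 : ∀ (T : ℝ), 0 < T → ∀ (N : ℕ), 0 < N → ∀ n ≤ N,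
      (∫ z in Ioo (0:ℝ) 1, (η T N n z - η0 z)^2) ≤ 2 * T^2 * C T := by
    intro T hT N hN n hn
    have hNne : (N:ℝ) ≠ 0 := Nat.cast_ne_zero.mpr hN.ne'
    have hTN : (0:ℝ) ≤ T / N := div_nonneg hT.le (Nat.cast_nonneg N)
    -- pointwise bound
    have hpt : ∀ z ∈ Ioo (0:ℝ) 1, (η T N n z - η0 z)^2
        ≤ (T/N)^2 * ((n:ℝ) * ∑ k ∈ Finset.range n, (vh T N k z)^2) := by
      intro z hz
      have h1 := hsum T hT N hN n hn z (Ioo_subset_Icc_self hz)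
      have h2 : η T N n z - η0 z = (T/N) * ∑ k ∈ Finset.range n, vh T N k z := by
        rw [h1]; ring
      rw [h2, mul_pow]
      refine mul_le_mul_of_nonneg_left ?_ (by positivity)
      have := sq_sum_le_card_mul_sum_sq (s := Finset.range n)
        (f := fun k => vh T N k z)
      simpa using this
    have hint1 : IntegrableOn (fun z => (η T N n z - η0 z)^2) (Ioo (0:ℝ) 1) volume :=
      Aux6.intOn' (((hreg T N n).1.1.continuousOn.sub hη0.1.continuousOn).pow 2)
    have hint2 : IntegrableOn
        (fun z => (T/N)^2 * ((n:ℝ) * ∑ k ∈ Finset.range n, (vh T N k z)^2))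
        (Ioo (0:ℝ) 1) volume := by
      refine Aux6.intOn' (continuousOn_const.mul (continuousOn_const.mul ?_))
      exact continuousOn_finset_sum _ fun k _ => (hreg T N k).2.1.continuousOn.pow 2
    have hmono := setIntegral_mono_on hint1 hint2 measurableSet_Ioo hpt
    have heval : (∫ z in Ioo (0:ℝ) 1,
        (T/N)^2 * ((n:ℝ) * ∑ k ∈ Finset.range n, (vh T N k z)^2))
        = (T/N)^2 * ((n:ℝ) * ∑ k ∈ Finset.range n, ∫ z in Ioo (0:ℝ) 1, (vh T N k z)^2) := by
      rw [integral_const_mul]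
      congr 1
      rw [integral_const_mul]
      congr 1
      exact integral_finset_sum _ fun k _ =>
        Aux6.intOn' ((hreg T N k).2.1.continuousOn.pow 2)
    have hsum_bd : (∑ k ∈ Finset.range n, ∫ z in Ioo (0:ℝ) 1, (vh T N k z)^2)
        ≤ (n:ℝ) * (2 * C T) := by
      calc (∑ k ∈ Finset.range n, ∫ z in Ioo (0:ℝ) 1, (vh T N k z)^2)
          ≤ ∑ _k ∈ Finset.range n, 2 * C T := by
            refine Finset.sum_le_sum fun k hk => ?_
            exact hvh_bd T hT N hN k (lt_of_lt_of_le (Finset.mem_range.mp hk) hn)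
        _ = (n:ℝ) * (2 * C T) := by simp [Finset.sum_const, mul_comm]
    -- combine
    have ha : (T/N) * (n:ℝ) ≤ T := by
      have : (n:ℝ) ≤ (N:ℝ) := Nat.cast_le.mpr hn
      calc (T/N) * (n:ℝ) ≤ (T/N) * (N:ℝ) := by
            exact mul_le_mul_of_nonneg_left this hTN
        _ = T := by field_simp
    have han : (0:ℝ) ≤ (T/N) * (n:ℝ) := mul_nonneg hTN (Nat.cast_nonneg n)
    have hfin : (T/N)^2 * ((n:ℝ) * ((n:ℝ) * (2 * C T))) ≤ 2 * T^2 * C T := by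
      have h := mul_le_mul ha ha han hT.le
      have hsq : ((T/N) * (n:ℝ))^2 ≤ T^2 := by nlinarith
      calc (T/N)^2 * ((n:ℝ) * ((n:ℝ) * (2 * C T)))
          = ((T/N) * (n:ℝ))^2 * (2 * C T) := by ring
        _ ≤ T^2 * (2 * C T) := by
            exact mul_le_mul_of_nonneg_right hsq (by nlinarith [hCnn T])
        _ = 2 * T^2 * C T := by ring
    calc (∫ z in Ioo (0:ℝ) 1, (η T N n z - η0 z)^2)
        ≤ (T/N)^2 * ((n:ℝ) * ∑ k ∈ Finset.range n, ∫ z in Ioo (0:ℝ) 1, (vh T N k z)^2) := by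
          rw [← heval]; exact hmono
      _ ≤ (T/N)^2 * ((n:ℝ) * ((n:ℝ) * (2 * C T))) := by
          refine mul_le_mul_of_nonneg_left ?_ (by positivity)
          exact mul_le_mul_of_nonneg_left hsum_bd (Nat.cast_nonneg n)
      _ ≤ 2 * T^2 * C T := hfin
  -- H¹ bound of the difference derivative
  have hH1 : ∀ (T : ℝ), 0 < T → ∀ (N : ℕ), 0 < N → ∀ n ≤ N,
      (∫ z in Ioo (0:ℝ) 1, (deriv (fun z => η T N n z - η0 z) z)^2) ≤ 8 * C T := by
    intro T hT N hN n hn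
    have hfd : MemVW (fun z => η T N n z - η0 z) := Aux6.memVW_sub (hreg T N n).1 hη0
    have hη0d : (∫ z in Ioo (0:ℝ) 1, (deriv η0 z)^2) ≤ 2 * C T := by
      have := hderiv_bd T hT N hN 0 (Nat.zero_le N)
      rwa [hinit T N] at this
    have hpt : ∀ z ∈ Ioo (0:ℝ) 1, (deriv (fun z => η T N n z - η0 z) z)^2
        ≤ 2 * (deriv (η T N n) z)^2 + 2 * (deriv η0 z)^2 := by
      intro z hz
      have hd : deriv (fun z => η T N n z - η0 z) z = deriv (η T N n) z - deriv η0 z :=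
        deriv_sub (Aux6.diffAt (hreg T N n).1 hz) (Aux6.diffAt hη0 hz)
      rw [hd]
      nlinarith [sq_nonneg (deriv (η T N n) z + deriv η0 z)]
    have hint1 := Aux6.int_deriv_sq hfd
    have hintA := Aux6.int_deriv_sq (hreg T N n).1
    have hintB := Aux6.int_deriv_sq hη0
    have hint2 : IntegrableOn
        (fun z => 2 * (deriv (η T N n) z)^2 + 2 * (deriv η0 z)^2) (Ioo (0:ℝ) 1) volume :=
      (hintA.const_mul 2).add (hintB.const_mul 2)
    have hmono := setIntegral_mono_on hint1 hint2 measurableSet_Ioo hpt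
    have heval : (∫ z in Ioo (0:ℝ) 1, (2 * (deriv (η T N n) z)^2 + 2 * (deriv η0 z)^2))
        = 2 * (∫ z in Ioo (0:ℝ) 1, (deriv (η T N n) z)^2)
          + 2 * (∫ z in Ioo (0:ℝ) 1, (deriv η0 z)^2) := by
      rw [integral_add (hintA.const_mul 2) (hintB.const_mul 2),
        integral_const_mul, integral_const_mul]
    have h1 := hderiv_bd T hT N hN n hn
    calc (∫ z in Ioo (0:ℝ) 1, (deriv (fun z => η T N n z - η0 z) z)^2)
        ≤ 2 * (∫ z in Ioo (0:ℝ) 1, (deriv (η T N n) z)^2)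
          + 2 * (∫ z in Ioo (0:ℝ) 1, (deriv η0 z)^2) := by rw [← heval]; exact hmono
      _ ≤ 8 * C T := by linarith
  -- pointwise interpolation bound
  have hsup : ∀ (T : ℝ), 0 < T → ∀ (N : ℕ), 0 < N → ∀ n ≤ N, ∀ z ∈ Icc (0:ℝ) 1,
      (η T N n z - η0 z)^2 ≤ 10 * T * C T := by
    intro T hT N hN n hn z hz
    set f : ℝ → ℝ := fun z => η T N n z - η0 z with hfdef
    have hf : MemVW f := Aux6.memVW_sub (hreg T N n).1 hη0
    have h1 := Aux6.sq_le hf hz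
    have hint1 := Aux6.int_abs_mul hf subset_rfl measurableSet_Ioo
    have hintf2 : IntegrableOn (fun t => (f t)^2) (Ioo (0:ℝ) 1) volume :=
      Aux6.intOn' (hf.1.continuousOn.pow 2)
    have hintd2 := Aux6.int_deriv_sq hf
    have hint2 : IntegrableOn (fun t => (1/T)*(f t)^2 + T*(deriv f t)^2)
        (Ioo (0:ℝ) 1) volume := (hintf2.const_mul _).add (hintd2.const_mul _)
    have h2 : (∫ t in Ioo (0:ℝ) 1, 2 * |f t| * |deriv f t|)
        ≤ ∫ t in Ioo (0:ℝ) 1, ((1/T)*(f t)^2 + T*(deriv f t)^2) :=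
      setIntegral_mono_on hint1 hint2 measurableSet_Ioo fun t _ => Aux6.young hT
    have h3 : (∫ t in Ioo (0:ℝ) 1, ((1/T)*(f t)^2 + T*(deriv f t)^2))
        = (1/T) * (∫ t in Ioo (0:ℝ) 1, (f t)^2)
          + T * (∫ t in Ioo (0:ℝ) 1, (deriv f t)^2) := by
      rw [integral_add (hintf2.const_mul _) (hintd2.const_mul _),
        integral_const_mul, integral_const_mul]
    have h4 : (∫ t in Ioo (0:ℝ) 1, (f t)^2) ≤ 2 * T^2 * C T := hL2 T hT N hN n hn
    have h5 : (∫ t in Ioo (0:ℝ) 1, (deriv f t)^2) ≤ 8 * C T := hH1 T hT N hN n hn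
    have h6 : (1/T) * (∫ t in Ioo (0:ℝ) 1, (f t)^2) ≤ (1/T) * (2 * T^2 * C T) :=
      mul_le_mul_of_nonneg_left h4 (by positivity)
    have h7 : T * (∫ t in Ioo (0:ℝ) 1, (deriv f t)^2) ≤ T * (8 * C T) :=
      mul_le_mul_of_nonneg_left h5 hT.le
    have h8 : (1/T) * (2 * T^2 * C T) = 2 * T * C T := by field_simp
    calc (f z)^2 ≤ ∫ t in Ioo (0:ℝ) 1, 2 * |f t| * |deriv f t| := h1
      _ ≤ (1/T) * (∫ t in Ioo (0:ℝ) 1, (f t)^2)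
          + T * (∫ t in Ioo (0:ℝ) 1, (deriv f t)^2) := by rw [← h3]; exact h2
      _ ≤ (1/T) * (2 * T^2 * C T) + T * (8 * C T) := add_le_add h6 h7
      _ = 10 * T * C T := by rw [h8]; ring
  constructor
  · -- part (a)
    intro T hT
    refine ⟨4 * T^2 * C T + 2 * (∫ z in Ioo (0:ℝ) 1, (η0 z)^2) + 2 * C T, ?_⟩
    intro N hN n hn
    have hint1 : IntegrableOn (fun z => (η T N n z)^2) (Ioo (0:ℝ) 1) volume :=
      Aux6.intOn' ((hreg T N n).1.1.continuousOn.pow 2)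
    have hintd : IntegrableOn (fun z => (η T N n z - η0 z)^2) (Ioo (0:ℝ) 1) volume :=
      Aux6.intOn' (((hreg T N n).1.1.continuousOn.sub hη0.1.continuousOn).pow 2)
    have hint0 : IntegrableOn (fun z => (η0 z)^2) (Ioo (0:ℝ) 1) volume :=
      Aux6.intOn' (hη0.1.continuousOn.pow 2)
    have hint2 : IntegrableOn (fun z => 2 * (η T N n z - η0 z)^2 + 2 * (η0 z)^2)
        (Ioo (0:ℝ) 1) volume := (hintd.const_mul 2).add (hint0.const_mul 2)
    have hpt : ∀ z ∈ Ioo (0:ℝ) 1,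
        (η T N n z)^2 ≤ 2 * (η T N n z - η0 z)^2 + 2 * (η0 z)^2 := by
      intro z _
      nlinarith [sq_nonneg (η T N n z - 2 * η0 z)]
    have hmono := setIntegral_mono_on hint1 hint2 measurableSet_Ioo hpt
    have heval : (∫ z in Ioo (0:ℝ) 1, (2 * (η T N n z - η0 z)^2 + 2 * (η0 z)^2))
        = 2 * (∫ z in Ioo (0:ℝ) 1, (η T N n z - η0 z)^2)
          + 2 * (∫ z in Ioo (0:ℝ) 1, (η0 z)^2) := by
      rw [integral_add (hintd.const_mul 2) (hint0.const_mul 2),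
        integral_const_mul, integral_const_mul]
    have h4 := hL2 T hT N hN n hn
    have h5 := hderiv_bd T hT N hN n hn
    rw [heval] at hmono
    linarith
  · -- part (b)
    obtain ⟨z0, hz0, hz0min⟩ := isCompact_Icc.exists_isMinOn (nonempty_Icc.mpr one_pos.le)
      (continuousOn_const.add hη0.1.continuousOn : ContinuousOn (fun z => 1 + η0 z) (Icc 0 1))
    obtain ⟨z1, hz1, hz1max⟩ := isCompact_Icc.exists_isMaxOn (nonempty_Icc.mpr one_pos.le)
      (continuousOn_const.add hη0.1.continuousOn : ContinuousOn (fun z => 1 + η0 z) (Icc 0 1))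
    obtain ⟨m, hmdef⟩ : ∃ x : ℝ, x = 1 + η0 z0 := ⟨_, rfl⟩
    have hm : 0 < m := hmdef ▸ hη0pos z0 hz0
    obtain ⟨C0, hC0def⟩ : ∃ x : ℝ, x = C 1 := ⟨_, rfl⟩
    have hC0 : 0 ≤ C0 := hC0def ▸ hCnn 1
    refine ⟨min 1 (m^2 / (40 * C0 + 40)), lt_min one_pos (by positivity), m/2,
      (1 + η0 z1) + m/2, by positivity, ?_⟩
    intro T hT hTle N hN n hn z hz
    -- C T ≤ C0
    have hT1 : T ≤ 1 := hTle.trans (min_le_left _ _)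
    have hsub : Ioo (0:ℝ) T ⊆ Ioo (0:ℝ) 1 := Ioo_subset_Ioo le_rfl hT1
    have hCT : C T ≤ C0 := by
      have hin : (∫ s in Ioo 0 T, (PinF s)^2) ≤ ∫ s in Ioo (0:ℝ) 1, (PinF s)^2 :=
        setIntegral_mono_set (hP 1 one_pos).1.integrable_sq
          (Eventually.of_forall fun s => sq_nonneg _) hsub.eventuallyLE
      have hout : (∫ s in Ioo 0 T, (PoutF s)^2) ≤ ∫ s in Ioo (0:ℝ) 1, (PoutF s)^2 :=
        setIntegral_mono_set (hP 1 one_pos).2.integrable_sq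
          (Eventually.of_forall fun s => sq_nonneg _) hsub.eventuallyLE
      rw [hC0def]
      simp only [hCdef]
      have := mul_le_mul_of_nonneg_left (add_le_add hin hout) hCtilde.le
      linarith
    -- smallness
    have hsm : (η T N n z - η0 z)^2 ≤ (m/2)^2 := by
      have h1 := hsup T hT N hN n hn z hz
      have hT0 : T ≤ m^2 / (40 * C0 + 40) := hTle.trans (min_le_right _ _)
      have h2 : T * (40 * C0 + 40) ≤ m^2 := by
        rw [le_div_iff₀ (by positivity)] at hT0
        linarith
      have h3 : 10 * T * C T ≤ 10 * T * C0 :=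
        mul_le_mul_of_nonneg_left hCT (by positivity)
      have h4 : 10 * T * C0 ≤ (m/2)^2 := by nlinarith
      linarith
    have habs : |η T N n z - η0 z| ≤ m/2 := by
      have := Real.sqrt_le_sqrt hsm
      rwa [Real.sqrt_sq_eq_abs, Real.sqrt_sq (by positivity)] at this
    obtain ⟨hlo, hhi⟩ := abs_le.mp habs
    have hminz : m ≤ 1 + η0 z := hmdef ▸ hz0min hz
    have hmaxz : 1 + η0 z ≤ 1 + η0 z1 := hz1max hz
    constructor
    · linarith
    · linarith
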